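/- arXiv:1312.7115 — 2 statements merged into one kernel-verified Lean document; each statement's English description precedes it below -/
import Mathlib

section
/- For every positive integer n, the sine Fourier coefficient of log Γ on (0,1) equals log n/(π n) + η/n; that is, 2·∫_0^1 log Γ(x) · sin(2π n x) dx = log n/(π n) + η/n. -/
/-!
Cutting `[0, 1]` into the `n` intervals `[k/n, (k+1)/n]` and substituting `x = (t + k)/n` turns
the coefficient into `(1/n) ∫₀¹ (∑ₖ log Γ((t + k)/n)) sin(2πt) dt`. By Gauss's multiplication
formula, obtained here from the Bohr–Mollerup theorem, the inner sum is
`log Γ(t) - (t - 1) log n + const`, and the affine part integrates against `sin(2πt)` to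
`log n / (2π)`.
-/

open Real

/-- The constant `η := 2·∫_0^1 log Γ(x) · sin(2π x) dx`. -/
noncomputable def fourierEta : ℝ :=
  2 * ∫ x in (0:ℝ)..1, Real.log (Real.Gamma x) * Real.sin (2 * π * x)

open Finset MeasureTheory

theorem IntervalIntegrable.comp_add_div {E : Type*} [NormedAddCommGroup E] {f : ℝ → E}
    {a b c d : ℝ} (hf : IntervalIntegrable f volume ((a + d) / c) ((b + d) / c)) (hc : c ≠ 0) :
    IntervalIntegrable (fun x => f ((x + d) / c)) volume a b := by
  have h := (hf.comp_add_right (d / c)).comp_mul_left (c := c⁻¹)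
  have hend : ∀ y, ((y + d) / c - d / c) / c⁻¹ = y := fun y => by field_simp; ring
  have hfun : (fun x => f (c⁻¹ * x + d / c)) = fun x => f ((x + d) / c) := by
    ext x
    ring_nf
  rwa [hend, hend, hfun] at h

theorem intervalIntegral.integral_zero_one_eq_sum_comp_add_div {E : Type*} [NormedAddCommGroup E]
    [NormedSpace ℝ E] {f : ℝ → E} (hf : IntervalIntegrable f volume 0 1) {n : ℕ} (hn : 0 < n) :
    ∫ x in (0:ℝ)..1, f x = (n : ℝ)⁻¹ • ∫ t in (0:ℝ)..1, ∑ k ∈ range n, f ((t + k) / n) := by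
  have hn' : (0 : ℝ) < n := by exact_mod_cast hn
  have hpiece : ∀ k < n, IntervalIntegrable f volume ((0 + k) / n) ((1 + k) / n) := by
    intro k hk
    refine hf.mono_set ?_
    rw [Set.uIcc_of_le zero_le_one, Set.uIcc_of_le (by gcongr; norm_num)]
    refine Set.Icc_subset_Icc (by positivity) ?_
    rw [div_le_one hn', add_comm]
    exact_mod_cast hk
  rw [intervalIntegral.integral_finsetSum fun k hk =>
    (hpiece k (mem_range.mp hk)).comp_add_div hn'.ne', smul_sum]
  have := intervalIntegral.sum_integral_adjacent_intervals (a := fun k : ℕ => (k : ℝ) / n)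
    (μ := volume) (f := f) (n := n) fun k hk => by simpa [add_comm] using hpiece k hk
  simp only [Nat.cast_zero, zero_div, div_self hn'.ne'] at this
  rw [← this]
  refine sum_congr rfl fun k _ => ?_
  simp_rw [add_div]
  rw [intervalIntegral.integral_comp_div_add f hn'.ne', smul_smul, inv_mul_cancel₀ hn'.ne', one_smul]
  rw [zero_div, zero_add, ← add_div, add_comm (1 : ℝ), Nat.cast_succ]

namespace Real

theorem intervalIntegrable_log_Gamma (a b : ℝ) :
    IntervalIntegrable (fun x => log (Gamma x)) volume a b := by
  have hinv : AnalyticOnNhd ℝ (fun x : ℝ => (Gamma x)⁻¹) (Set.uIcc a b) := fun x _ => by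
    simpa [Complex.Gamma_ofReal, ← Complex.ofReal_inv] using
      (Complex.differentiable_one_div_Gamma.analyticAt (x : ℂ)).re_ofReal
  simpa [log_inv, Pi.neg_def] using hinv.meromorphicOn.intervalIntegrable_log_norm.neg

theorem convexOn_log_Gamma_add_div {c d : ℝ} (hc : 0 < c) (hd : 0 ≤ d) :
    ConvexOn ℝ (Set.Ioi 0) fun t => log (Gamma ((t + d) / c)) := by
  refine ⟨convex_Ioi 0, fun x hx y hy a b ha hb hab => ?_⟩
  have hx' : (x + d) / c ∈ Set.Ioi 0 := div_pos (by linarith [Set.mem_Ioi.mp hx]) hc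
  have hy' : (y + d) / c ∈ Set.Ioi 0 := div_pos (by linarith [Set.mem_Ioi.mp hy]) hc
  have hcomb : (a • x + b • y + d) / c = a • ((x + d) / c) + b • ((y + d) / c) := by
    simp only [smul_eq_mul]
    rw [mul_div_assoc', mul_div_assoc', ← add_div]
    congr 1
    linear_combination (-d) * hab
  simpa only [hcomb, Function.comp_apply] using convexOn_log_Gamma.2 hx' hy' ha hb hab

theorem prod_Gamma_add_one_add_div {n : ℕ} (hn : 0 < n) {t : ℝ} (ht : t ≠ 0) :
    ∏ k ∈ range n, Gamma ((t + 1 + k) / n) = t / n * ∏ k ∈ range n, Gamma ((t + k) / n) := by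
  obtain ⟨m, rfl⟩ : ∃ m, n = m + 1 := ⟨n - 1, by omega⟩
  rw [prod_range_succ, prod_range_succ']
  push_cast
  have hlast : Gamma ((t + 1 + m) / (m + 1)) = t / (m + 1) * Gamma (t / (m + 1)) := by
    rw [← Gamma_add_one (div_ne_zero ht (by positivity))]
    congr 1
    field_simp
    ring
  have hshift : ∀ k ∈ range m, Gamma ((t + (k + 1)) / (m + 1)) = Gamma ((t + 1 + k) / (m + 1)) :=
    fun k _ => by ring_nf
  rw [prod_congr rfl hshift, hlast, add_zero]
  ring

theorem convexOn_sum_log_Gamma_add_div {n : ℕ} (hn : 0 < n) :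
    ConvexOn ℝ (Set.Ioi 0) fun s => ∑ k ∈ range n, log (Gamma ((s + k) / n)) := by
  have hn' : (0 : ℝ) < n := by exact_mod_cast hn
  have hsum : ConvexOn ℝ (Set.Ioi 0) (∑ k ∈ range n, fun s => log (Gamma ((s + k) / n))) :=
    sum_induction _ (ConvexOn ℝ (Set.Ioi 0)) (fun _ _ => ConvexOn.add)
      (convexOn_const 0 (convex_Ioi 0)) fun k _ => convexOn_log_Gamma_add_div hn' k.cast_nonneg
  simpa only [Finset.sum_fn] using hsum

theorem rpow_mul_prod_Gamma_add_div {n : ℕ} (hn : 0 < n) {t : ℝ} (ht : 0 < t) :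
    (n : ℝ) ^ (t - 1) * ∏ k ∈ range n, Gamma ((t + k) / n)
      = (∏ k ∈ range n, Gamma ((1 + k) / n)) * Gamma t := by
  have hn' : (0 : ℝ) < n := by exact_mod_cast hn
  have hprod_pos : ∀ {s : ℝ}, 0 < s → 0 < ∏ k ∈ range n, Gamma ((s + k) / n) := fun hs =>
    prod_pos fun k _ => Gamma_pos_of_pos (by positivity)
  set C := ∏ k ∈ range n, Gamma ((1 + k) / n)
  have hC : 0 < C := hprod_pos one_pos
  let f : ℝ → ℝ := fun s => (n : ℝ) ^ (s - 1) * (∏ k ∈ range n, Gamma ((s + k) / n)) / C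
  have hlog : Set.EqOn
      (fun s => ∑ k ∈ range n, log (Gamma ((s + k) / n)) + log n • s + (-log n - log C))
      (log ∘ f) (Set.Ioi 0) := fun s hs => by
    have hΓ : ∀ k ∈ range n, Gamma ((s + k) / n) ≠ 0 := fun k _ =>
      (Gamma_pos_of_pos (by have := Set.mem_Ioi.mp hs; positivity)).ne'
    simp only [f, Function.comp_apply, smul_eq_mul]
    rw [log_div (by have := hprod_pos hs; positivity) hC.ne',
      log_mul (by positivity) (hprod_pos hs).ne', log_rpow hn', log_prod hΓ]
    ring
  have hlin := (convexOn_id (convex_Ioi (0 : ℝ))).smul (log_natCast_nonneg n)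
  have hconv : ConvexOn ℝ (Set.Ioi 0) (log ∘ f) :=
    (((convexOn_sum_log_Gamma_add_div hn).add hlin).add_const _).congr hlog
  have hfeq : ∀ {s : ℝ}, 0 < s → f (s + 1) = s * f s := fun hs => by
    simp only [f, add_sub_cancel_right, prod_Gamma_add_one_add_div hn hs.ne']
    rw [rpow_sub_one hn'.ne']
    field_simp
  have hpos : ∀ {s : ℝ}, 0 < s → 0 < f s := fun hs => by
    have := hprod_pos hs
    positivity
  have hone : f 1 = 1 := by
    show (n : ℝ) ^ ((1 : ℝ) - 1) * C / C = 1
    simp [hC.ne']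
  have hf := eq_Gamma_of_log_convex hconv hfeq hpos hone ht
  simp only [f] at hf
  field_simp at hf
  linear_combination hf

theorem sum_log_Gamma_add_div {n : ℕ} (hn : 0 < n) {t : ℝ} (ht : 0 < t) :
    ∑ k ∈ range n, log (Gamma ((t + k) / n))
      = log (Gamma t) - (t - 1) * log n + ∑ k ∈ range n, log (Gamma ((1 + k) / n)) := by
  have hn' : (0 : ℝ) < n := by exact_mod_cast hn
  have hΓ : ∀ {s : ℝ}, 0 < s → ∀ k ∈ range n, Gamma ((s + k) / n) ≠ 0 := fun hs k _ =>
    (Gamma_pos_of_pos (by positivity)).ne'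
  have := congrArg log (rpow_mul_prod_Gamma_add_div hn ht)
  rw [log_mul (by positivity) (prod_ne_zero_iff.mpr (hΓ ht)), log_mul
    (prod_ne_zero_iff.mpr (hΓ one_pos)) (Gamma_pos_of_pos ht).ne', log_rpow hn', log_prod (hΓ ht),
    log_prod (hΓ one_pos)] at this
  linarith

theorem integral_affine_mul_sin_two_pi_mul (a b : ℝ) :
    ∫ t in (0 : ℝ)..1, (a * t + b) * sin (2 * π * t) = -a / (2 * π) := by
  have hderiv : ∀ t ∈ Set.uIcc (0 : ℝ) 1, HasDerivAt
      (fun t => a * sin (2 * π * t) / (2 * π) ^ 2 - (a * t + b) * cos (2 * π * t) / (2 * π))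
      ((a * t + b) * sin (2 * π * t)) t := fun t _ => by
    have hlin : HasDerivAt (fun t : ℝ => 2 * π * t) (2 * π) t := by
      simpa using (hasDerivAt_id t).const_mul (2 * π)
    have := ((((hasDerivAt_sin _).comp t hlin).const_mul a).div_const ((2 * π) ^ 2)).sub
      ((((hasDerivAt_id t).const_mul a).add_const b).mul ((hasDerivAt_cos _).comp t hlin)
        |>.div_const (2 * π))
    refine this.congr_deriv ?_
    simp only [Function.comp_apply, id]
    field_simp
    ring
  rw [intervalIntegral.integral_eq_sub_of_hasDerivAt hderiv
    (Continuous.intervalIntegrable (by fun_prop) 0 1)]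
  simp only [mul_one, mul_zero, sin_two_pi, cos_two_pi, sin_zero, cos_zero]
  field_simp
  ring

end Real

/-- The sine Fourier coefficients of `log Γ` on `(0,1)`:
`2·∫_0^1 log Γ(x)·sin(2πnx) dx = log n/(πn) + η/n` for every positive integer `n`. -/
theorem logGamma_sin_fourier_coeff (n : ℕ) (hn : 0 < n) :
    2 * ∫ x in (0:ℝ)..1, Real.log (Real.Gamma x) * Real.sin (2 * π * n * x)
      = Real.log n / (π * n) + fourierEta / n := by
  have hn' : (0 : ℝ) < n := by exact_mod_cast hn
  set C := ∑ k ∈ range n, log (Gamma ((1 + k) / n))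
  have hfold : ∀ t ∈ Set.uIoc (0 : ℝ) 1,
      ∑ k ∈ range n, log (Gamma ((t + k) / n)) * sin (2 * π * n * ((t + k) / n))
        = log (Gamma t) * sin (2 * π * t) + (-log n * t + (log n + C)) * sin (2 * π * t) := by
    intro t ht
    rw [Set.uIoc_of_le zero_le_one] at ht
    have hperiod : ∀ k : ℕ, sin (2 * π * n * ((t + k) / n)) = sin (2 * π * t) := fun k => by
      rw [show 2 * π * n * ((t + k) / n) = 2 * π * t + k * (2 * π) by field_simp,
        sin_add_nat_mul_two_pi]
    simp_rw [hperiod, ← sum_mul, sum_log_Gamma_add_div hn ht.1]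
    ring
  rw [intervalIntegral.integral_zero_one_eq_sum_comp_add_div
      ((intervalIntegrable_log_Gamma 0 1).mul_continuousOn (by fun_prop)) hn,
    intervalIntegral.integral_congr_ae (ae_of_all _ hfold),
    intervalIntegral.integral_add ((intervalIntegrable_log_Gamma 0 1).mul_continuousOn
      (by fun_prop)) (Continuous.intervalIntegrable (by fun_prop) 0 1),
    integral_affine_mul_sin_two_pi_mul, fourierEta, smul_eq_mul]
  field_simp
  ring
end

section
/- For all positive integers k and n, one has k · (2·∫_0^1 log Γ(x)·sin(2π k n x) dx) = 2·∫_0^1 log Γ(x)·sin(2π n x) dx + log k/(π n); in other words, the sine Fourier coefficients b_m := 2·∫_0^1 log Γ(x)·sin(2π m x) dx of log Γ on (0,1) satisfy k·b_{kn} = b_n + log k/(π n). -/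
/-!
Gauss's multiplication formula says that `∑_{j<k} log Γ((x + j)/k)` differs from `log Γ x` by an
affine function of `x`; it follows from the Bohr–Mollerup characterisation of `log Γ` as the convex
solution of `f (x + 1) = f x + log x`, up to an additive constant. Substituting `x = (u + j)/k` on
the pieces `[j/k, (j+1)/k]` of `[0, 1]` turns `k · b_{kn}` into the `n`-th sine coefficient of that
sum, i.e. `b_n` plus the coefficient of the affine term, which is `log k / (π n)`.
-/

open Real Set MeasureTheory

theorem ConvexOn.finsetSum {𝕜 E β ι : Type*} [Semiring 𝕜] [PartialOrder 𝕜] [AddCommMonoid E]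
    [AddCommMonoid β] [PartialOrder β] [IsOrderedAddMonoid β] [SMul 𝕜 E] [Module 𝕜 β]
    {s : Set E} (hs : Convex 𝕜 s) {t : Finset ι} {f : ι → E → β}
    (hf : ∀ i ∈ t, ConvexOn 𝕜 s (f i)) : ConvexOn 𝕜 s fun x ↦ ∑ i ∈ t, f i x := by
  classical
  induction t using Finset.induction_on with
  | empty => simpa using convexOn_const 0 hs
  | insert i t hi ih =>
    simp only [Finset.sum_insert hi]
    exact (hf i (Finset.mem_insert_self i t)).add
      (ih fun j hj ↦ hf j (Finset.mem_insert_of_mem hj))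

theorem ConvexOn.comp_add_div_Ioi {φ : ℝ → ℝ} (hφ : ConvexOn ℝ (Ioi 0) φ) {b c : ℝ}
    (hb : 0 ≤ b) (hc : 0 < c) : ConvexOn ℝ (Ioi 0) fun x ↦ φ ((x + b) / c) := by
  have hsub : Ioi (0 : ℝ) ⊆ AffineMap.lineMap (b / c) ((1 + b) / c) ⁻¹' Ioi 0 := by
    intro x (hx : 0 < x)
    simp only [mem_preimage, AffineMap.lineMap_apply_ring', mem_Ioi]
    field_simp
    linarith
  refine ((hφ.comp_affineMap _).subset hsub (convex_Ioi 0)).congr fun x _ ↦ ?_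
  simp only [Function.comp_apply, AffineMap.lineMap_apply_ring']
  congr 1
  field_simp
  ring

theorem log_Gamma_eq_sub_of_convexOn {f : ℝ → ℝ} (hf_conv : ConvexOn ℝ (Ioi 0) f)
    (hf_feq : ∀ {y : ℝ}, 0 < y → f (y + 1) = f y + log y) {x : ℝ} (hx : 0 < x) :
    log (Gamma x) = f x - f 1 :=
  tendsto_nhds_unique (BohrMollerup.tendsto_log_gamma hx)
    (BohrMollerup.tendsto_logGammaSeq hf_conv hf_feq hx)

/-- Gauss's multiplication formula, in logarithmic form. -/
theorem sum_log_Gamma_add_div {k : ℕ} (hk : k ≠ 0) {x : ℝ} (hx : 0 < x) :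
    ∑ j ∈ Finset.range k, log (Gamma ((x + j) / k)) =
      log (Gamma x) + (1 - x) * log k + ∑ j ∈ Finset.range k, log (Gamma ((1 + j) / k)) := by
  have hk' : (0 : ℝ) < k := by positivity
  set F : ℝ → ℝ := fun y ↦ ∑ j ∈ Finset.range k, log (Gamma ((y + j) / k)) + y * log k with hF
  have hF_conv : ConvexOn ℝ (Ioi 0) F :=
    (ConvexOn.finsetSum (convex_Ioi 0) fun j _ ↦
      convexOn_log_Gamma.comp_add_div_Ioi j.cast_nonneg hk').add
      (LinearMap.convexOn (LinearMap.smulRight LinearMap.id (log k)) (convex_Ioi 0))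
  have hF_feq : ∀ {y : ℝ}, 0 < y → F (y + 1) = F y + log y := by
    intro y hy
    have htel : ∑ j ∈ Finset.range k, log (Gamma ((y + 1 + j) / k)) =
        ∑ j ∈ Finset.range k, log (Gamma ((y + j) / k)) + log (Gamma (y / k + 1)) -
          log (Gamma (y / k)) := by
      have h := Finset.sum_range_succ' (fun j : ℕ ↦ log (Gamma ((y + j) / k))) k
      have hk_div : (y + k) / k = y / k + 1 := by field_simp
      simp only [Finset.sum_range_succ, Nat.cast_add, Nat.cast_one, Nat.cast_zero, add_zero,
        hk_div] at h
      simp only [add_assoc, add_comm (1 : ℝ)] at h ⊢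
      linarith
    have hstep : log (Gamma (y / k + 1)) = log (y / k) + log (Gamma (y / k)) := by
      rw [Gamma_add_one (by positivity),
        log_mul (by positivity) (Gamma_pos_of_pos (by positivity)).ne']
    simp only [hF, htel, hstep, log_div hy.ne' hk'.ne']
    ring
  have := log_Gamma_eq_sub_of_convexOn hF_conv hF_feq hx
  simp only [hF, one_mul] at this
  linarith

theorem intervalIntegrable_log_Gamma {a b : ℝ} (ha : 0 ≤ a) (hb : 0 ≤ b) :
    IntervalIntegrable (fun x ↦ log (Gamma x)) volume a b := by
  have hshift : ContinuousOn (fun x ↦ log (Gamma (x + 1))) (uIcc a b) := by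
    intro x hx
    have hx1 : 0 < x + 1 := by linarith [le_trans (le_min ha hb) hx.1]
    refine ContinuousAt.continuousWithinAt ?_
    refine ((differentiableAt_Gamma fun m ↦ ?_).continuousAt.comp (by fun_prop)).log
      (Gamma_pos_of_pos hx1).ne'
    linarith [(m.cast_nonneg : (0 : ℝ) ≤ m)]
  refine (hshift.intervalIntegrable.sub intervalIntegral.intervalIntegrable_log').congr
    fun x hx ↦ ?_
  have hx0 : 0 < x := lt_of_le_of_lt (le_min ha hb) hx.1
  simp only [Gamma_add_one hx0.ne', log_mul hx0.ne' (Gamma_pos_of_pos hx0).ne']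
  ring

theorem integral_affine_mul_sin_two_pi_mul (a b : ℝ) {n : ℤ} (hn : n ≠ 0) :
    ∫ x in (0 : ℝ)..1, (a + b * x) * sin (2 * π * n * x) = -b / (2 * π * n) := by
  set c : ℝ := 2 * π * n with hc_def
  have hc : c ≠ 0 := by positivity
  have hderiv : ∀ x ∈ uIcc (0 : ℝ) 1, HasDerivAt
      (fun y ↦ -(a + b * y) * cos (c * y) / c + b * sin (c * y) / c ^ 2)
      ((a + b * x) * sin (c * x)) x := by
    intro x _
    have hcx : HasDerivAt (fun y ↦ c * y) c x := by simpa using (hasDerivAt_id x).const_mul c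
    have hlin : HasDerivAt (fun y ↦ -(a + b * y)) (-b) x := by
      have h := (((hasDerivAt_id' x).const_mul b).const_add a).neg
      rwa [mul_one] at h
    refine (((hlin.mul hcx.cos).div_const c).add
      ((hcx.sin.const_mul b).div_const (c ^ 2))).congr_deriv ?_
    field_simp
    ring
  rw [intervalIntegral.integral_eq_sub_of_hasDerivAt hderiv
    ((by fun_prop : Continuous _).intervalIntegrable 0 1)]
  have hc_one : c * 1 = n * (2 * π) := by rw [hc_def]; ring
  simp only [hc_one, mul_zero, cos_int_mul_two_pi, sin_periodic.int_mul_eq, cos_zero, sin_zero]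
  field_simp
  ring

theorem natCast_mul_integral_mul_comp_natCast_mul {f g : ℝ → ℝ}
    (hf : IntervalIntegrable f volume 0 1) (hg : Continuous g) (hg_per : Function.Periodic g 1)
    (k : ℕ) :
    k * ∫ x in (0 : ℝ)..1, f x * g (k * x) =
      ∫ u in (0 : ℝ)..1, (∑ j ∈ Finset.range k, f ((u + j) / k)) * g u := by
  rcases eq_or_ne k 0 with rfl | hk
  · simp
  have hk' : (0 : ℝ) < k := by positivity
  set H : ℝ → ℝ := fun y ↦ f (y / k) * g y with hH_def
  have hH : IntervalIntegrable H volume 0 k := by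
    have := hf.comp_mul_left (c := (k : ℝ)⁻¹)
    simp only [div_inv_eq_mul, zero_mul, one_mul] at this
    simpa only [hH_def, div_eq_inv_mul] using this.mul_continuousOn hg.continuousOn
  have hH_piece : ∀ j < k, IntervalIntegrable H volume j (j + 1) := fun j hj ↦
    hH.mono_set (uIcc_subset_uIcc (mem_uIcc_of_le (by positivity) (by exact_mod_cast hj.le))
      (mem_uIcc_of_le (by positivity) (by exact_mod_cast hj)))
  have hH_shift : ∀ j < k, IntervalIntegrable (fun u ↦ H (u + j)) volume 0 1 := fun j hj ↦ by
    simpa using (hH_piece j hj).comp_add_right j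
  calc k * ∫ x in (0 : ℝ)..1, f x * g (k * x)
      = ∫ y in (0 : ℝ)..k, H y := by
        have hcomp : ∀ x : ℝ, f x * g (k * x) = H (k * x) := fun x ↦ by
          simp only [hH_def, mul_div_cancel_left₀ x hk'.ne']
        simp_rw [hcomp]
        rw [← smul_eq_mul, intervalIntegral.smul_integral_comp_mul_left, mul_zero, mul_one]
    _ = ∑ j ∈ Finset.range k, ∫ y in (j : ℝ)..(j + 1 : ℕ), H y := by
        rw [intervalIntegral.sum_integral_adjacent_intervals
          fun j hj ↦ by simpa using hH_piece j hj]
        simp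
    _ = ∑ j ∈ Finset.range k, ∫ u in (0 : ℝ)..1, H (u + j) := by
        refine Finset.sum_congr rfl fun j _ ↦ ?_
        simp [intervalIntegral.integral_comp_add_right, add_comm]
    _ = ∫ u in (0 : ℝ)..1, ∑ j ∈ Finset.range k, H (u + j) :=
        (intervalIntegral.integral_finsetSum fun j hj ↦ hH_shift j (Finset.mem_range.mp hj)).symm
    _ = ∫ u in (0 : ℝ)..1, (∑ j ∈ Finset.range k, f ((u + j) / k)) * g u := by
        have hg_shift : ∀ (j : ℕ) (u : ℝ), g (u + j) = g u := fun j u ↦ by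
          simpa using hg_per.nat_mul j u
        simp only [hH_def, Finset.sum_mul, hg_shift]

/-- The sine Fourier coefficients `b_m := 2·∫_0^1 log Γ(x)·sin(2πmx) dx` of `log Γ` on `(0,1)`
satisfy `k·b_{kn} = b_n + log k/(πn)` for all positive integers `k`, `n`. -/
theorem logGamma_sin_fourier_coeff_rec (k n : ℕ) (hk : 0 < k) (hn : 0 < n) :
    (k : ℝ) * (2 * ∫ x in (0:ℝ)..1, Real.log (Real.Gamma x) * Real.sin (2 * π * (k * n) * x))
      = (2 * ∫ x in (0:ℝ)..1, Real.log (Real.Gamma x) * Real.sin (2 * π * n * x))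
        + Real.log k / (π * n) := by
  have hlogΓ : IntervalIntegrable (fun x ↦ log (Gamma x)) volume 0 1 :=
    intervalIntegrable_log_Gamma le_rfl zero_le_one
  have hsin : Continuous fun u : ℝ ↦ sin (2 * π * n * u) := by fun_prop
  have hsin_per : Function.Periodic (fun u : ℝ ↦ sin (2 * π * n * u)) 1 := fun u ↦ by
    simpa only [mul_add, mul_one, mul_comm (2 * π)] using sin_add_nat_mul_two_pi (2 * π * n * u) n
  set C := ∑ j ∈ Finset.range k, log (Gamma ((1 + j) / k))
  have hrescale := natCast_mul_integral_mul_comp_natCast_mul hlogΓ hsin hsin_per k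
  have hgauss : ∫ u in (0 : ℝ)..1, (∑ j ∈ Finset.range k, log (Gamma ((u + j) / k))) *
        sin (2 * π * n * u) =
      ∫ u in (0 : ℝ)..1, log (Gamma u) * sin (2 * π * n * u) +
        ((log k + C) + (-log k) * u) * sin (2 * π * n * u) := by
    refine intervalIntegral.integral_congr_ae (Filter.Eventually.of_forall fun u hu ↦ ?_)
    rw [uIoc_of_le zero_le_one] at hu
    rw [sum_log_Gamma_add_div hk.ne' hu.1]
    ring
  have hfourier :=
    integral_affine_mul_sin_two_pi_mul (log k + C) (-log k) (Int.natCast_ne_zero.mpr hn.ne')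
  rw [Int.cast_natCast] at hfourier
  rw [intervalIntegral.integral_add (hlogΓ.mul_continuousOn hsin.continuousOn)
    ((by fun_prop : Continuous _).intervalIntegrable 0 1), hfourier] at hgauss
  have harg : ∀ x : ℝ, 2 * π * (k * n) * x = 2 * π * n * (k * x) := fun x ↦ by ring
  simp_rw [harg]
  rw [mul_left_comm, hrescale, hgauss]
  field_simp
end
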